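/- arXiv:0805.4575 — 3 statements merged into one kernel-verified Lean document; each statement's English description precedes it below -/
import Mathlib

section
/- The element z' lies in the cone C⁺_μ; explicitly, ⟨z', ω_i⟩ ≤ ⟨μ, ω_i⟩ for all i ∈ I. -/
/-!
Common setup: an abstract reduced irreducible crystallographic root system `R`
inside a real inner product space `E`, with simple roots `α i` (`i : ι`) forming
a basis of `E`, Weyl group generated by the reflections in the roots
(equivalently, by the simple reflections), coroot pairing
`⟨x, a∨⟩ = 2 (x, a) / (a, a)`, weight lattice `P(R)`, root lattices `Q(R)`,
`Q(R_J)`, etc.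
-/

open scoped BigOperators

noncomputable section

/-- the pairing `⟨x, a∨⟩ = 2 (x, a)/(a, a)` of `x` with the coroot of `a`. -/
def pairR {E : Type} [NormedAddCommGroup E] [InnerProductSpace ℝ E] (x a : E) : ℝ :=
  2 * (inner ℝ x a : ℝ) / (inner ℝ a a : ℝ)

/-- the reflection in (the hyperplane orthogonal to) `a`. -/
def reflFun {E : Type} [NormedAddCommGroup E] [InnerProductSpace ℝ E] (a : E) (x : E) : E :=
  x - pairR x a • a

/-- A reduced irreducible crystallographic root system in a real inner product
space `E`, whose set of simple roots `simple : ι → E` is a basis of `E`. -/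
structure RootSystemCtx (ι E : Type) [Fintype ι] [DecidableEq ι]
    [NormedAddCommGroup E] [InnerProductSpace ℝ E] : Type where
  Roots : Set E
  simple : ι → E
  simple_mem : ∀ i, simple i ∈ Roots
  finite : Roots.Finite
  ne_zero : ∀ a ∈ Roots, a ≠ 0
  reduced : ∀ a ∈ Roots, ∀ t : ℝ, t • a ∈ Roots → t = 1 ∨ t = -1
  crystal : ∀ a ∈ Roots, ∀ b ∈ Roots, ∃ n : ℤ, pairR a b = (n : ℝ)
  refl_stable : ∀ a ∈ Roots, ∀ b ∈ Roots, reflFun b a ∈ Roots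
  indep : LinearIndependent ℝ simple
  span_top : Submodule.span ℝ (Set.range simple) = ⊤
  pos_neg : ∀ a ∈ Roots, (∃ c : ι → ℕ, a = ∑ i, (c i : ℝ) • simple i) ∨
      (∃ c : ι → ℕ, a = -∑ i, (c i : ℝ) • simple i)
  irred : ∀ R1 R2 : Set E, Roots = R1 ∪ R2 →
      (∀ a ∈ R1, ∀ b ∈ R2, (inner ℝ a b : ℝ) = 0) → R1 = ∅ ∨ R2 = ∅

namespace RootSystemCtx

variable {ι E : Type} [Fintype ι] [DecidableEq ι]
  [NormedAddCommGroup E] [InnerProductSpace ℝ E]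
variable (S : RootSystemCtx ι E)

/-- `R` is simply laced: `⟨a, b∨⟩ ∈ {-1, 0, 1}` for roots `b ≠ ± a`. -/
def SimplyLaced : Prop :=
  ∀ a ∈ S.Roots, ∀ b ∈ S.Roots, b ≠ a → b ≠ -a →
    pairR a b = -1 ∨ pairR a b = 0 ∨ pairR a b = 1

/-- membership in the weight lattice `P(R)`. -/
def IsWeight (x : E) : Prop := ∀ a ∈ S.Roots, ∃ n : ℤ, pairR x a = (n : ℝ)

/-- `x` is dominant: `⟨x, αᵢ∨⟩ ≥ 0` for all simple roots. -/
def IsDominant (x : E) : Prop := ∀ i, 0 ≤ pairR x (S.simple i)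

/-- positive roots: roots that are nonnegative combinations of simple roots. -/
def IsPositiveRoot (a : E) : Prop :=
  a ∈ S.Roots ∧ ∃ c : ι → ℕ, a = ∑ i, (c i : ℝ) • S.simple i

/-- the root lattice `Q(R)`. -/
def rootLattice : AddSubgroup E := AddSubgroup.closure S.Roots

/-- the root lattice `Q(R_J)` of the sub-root system `R_J`. -/
def rootLatticeJ (J : Finset ι) : AddSubgroup E :=
  AddSubgroup.closure (S.simple '' ↑J)

/-- the sub-root system `R_J` determined by the simple roots `α_j`, `j ∈ J`. -/
def RootsJ (J : Finset ι) : Set E :=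
  {a | a ∈ S.Roots ∧ a ∈ Submodule.span ℝ (S.simple '' ↑J)}

/-- `x` is `J`-dominant. -/
def IsJDominant (J : Finset ι) (x : E) : Prop := ∀ j ∈ J, 0 ≤ pairR x (S.simple j)

/-- `x` is `J`-minuscule: `⟨x, a∨⟩ ∈ {-1,0,1}` for all `a ∈ R_J`. -/
def IsJMinuscule (J : Finset ι) (x : E) : Prop :=
  ∀ a ∈ S.RootsJ J, pairR x a = -1 ∨ pairR x a = 0 ∨ pairR x a = 1

/-- the action of a word `[i₁, …, i_t]` of simple reflections:
`s_{i₁} ∘ ⋯ ∘ s_{i_t}`. -/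
def wordAct (l : List ι) : E → E :=
  l.foldr (fun i f => reflFun (S.simple i) ∘ f) id

/-- membership in the Weyl group `W` (generated by the simple reflections). -/
def InWeyl (w : E → E) : Prop := ∃ l : List ι, S.wordAct l = w

/-- the Weyl group orbit `W x`. -/
def weylOrbit (x : E) : Set E := {y | ∃ l : List ι, y = S.wordAct l x}

/-- a word is reduced if no shorter word gives the same Weyl group element. -/
def IsReducedWord (l : List ι) : Prop :=
  ∀ l' : List ι, S.wordAct l' = S.wordAct l → l.length ≤ l'.length

/-- `w ∈ W` is `λ`-minuscule: some (equivalently, any) reduced expression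
`w = s_{i₁} ⋯ s_{i_t}` satisfies
`⟨s_{i_{r+1}} ⋯ s_{i_t} λ, α_{i_r}∨⟩ = -1` for all `1 ≤ r ≤ t`. -/
def IsMinusculeFor (lam : E) (w : E → E) : Prop :=
  ∃ l : List ι, S.wordAct l = w ∧ S.IsReducedWord l ∧
    ∀ r : Fin l.length,
      pairR (S.wordAct (l.drop (r + 1)) lam) (S.simple (l.get r)) = -1

/-- the basis of simple roots. -/
def simpleBasis : Module.Basis ι ℝ E := Module.Basis.mk S.indep S.span_top.ge

/-- `⟨x, ωᵢ⟩`: the pairing with the fundamental coweight `ωᵢ` dual to `αᵢ`,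
i.e. the `i`-th coordinate of `x` in the basis of simple roots. -/
def coweightPair (x : E) (i : ι) : ℝ := S.simpleBasis.repr x i

end RootSystemCtx

/-!
For dominant `μ` every `wμ` lies below `μ` in each coordinate `⟨·, ωᵢ⟩` (induction on a
reduced word, via the exchange lemma), hence so does `closure Conv(Wμ)`. This closed convex set
contains `y`: it is stable under the reflections `sⱼ`, `j ∈ J`, which fix `y`, so its point
nearest to `y` is orthogonal to the `αⱼ` and must be `y` itself. Finally, for `i ∈ J` the number
`⟨z' - μ, ωᵢ⟩` is an integer, as `z' ≡ z ≡ μ` modulo `Q(R)`, and it is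
`⟨y - μ, ωᵢ⟩ + fract kᵢ < 1`; for `i ∉ J` it is `⟨y - μ, ωᵢ⟩`.
-/

open scoped InnerProductSpace

section Reflection

variable {F : Type} [NormedAddCommGroup F] [InnerProductSpace ℝ F]

theorem reflFun_eq_reflection (a : F) : reflFun a = (ℝ ∙ a)ᗮ.reflection := by
  funext x
  rw [Submodule.reflection_orthogonal_apply, Submodule.reflection_singleton_apply, reflFun, pairR,
    real_inner_self_eq_norm_sq, real_inner_comm]
  module

theorem reflFun_reflFun (a x : F) : reflFun a (reflFun a x) = x := by
  rw [reflFun_eq_reflection, Submodule.reflection_reflection]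

theorem inner_eq_zero_of_inner_reflFun_sub_nonpos {y q a : F} (hya : ⟪y, a⟫_ℝ = 0)
    (h : ⟪y - q, reflFun a q - q⟫_ℝ ≤ 0) : ⟪q, a⟫_ℝ = 0 := by
  rcases eq_or_ne a 0 with rfl | ha
  · exact inner_zero_right q
  have haa : 0 < ⟪a, a⟫_ℝ := real_inner_self_pos.2 ha
  have h' : 2 * ⟪q, a⟫_ℝ ^ 2 / ⟪a, a⟫_ℝ ≤ 0 := by
    simp only [reflFun, pairR, sub_sub_cancel_left, inner_neg_right, real_inner_smul_right,
      inner_sub_left, hya] at h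
    linarith [show 2 * ⟪q, a⟫_ℝ ^ 2 / ⟪a, a⟫_ℝ = 2 * ⟪q, a⟫_ℝ / ⟪a, a⟫_ℝ * ⟪q, a⟫_ℝ by ring]
  rw [div_le_iff₀ haa, zero_mul] at h'
  nlinarith [sq_nonneg ⟪q, a⟫_ℝ]

/-- The point `q ∈ C` nearest to `y` is orthogonal to `A`, so `y - q ⊥ c - y`, and the
variational inequality `⟪y - q, c - q⟫ ≤ 0` becomes `‖y - q‖² ≤ 0`. -/
theorem mem_of_reflFun_mapsTo [CompleteSpace F] {A C : Set F} {y c : F} (hC : IsClosed C)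
    (hCconv : Convex ℝ C) (hCA : ∀ a ∈ A, Set.MapsTo (reflFun a) C C)
    (hyA : ∀ a ∈ A, ⟪y, a⟫_ℝ = 0) (hc : c ∈ C) (hcy : c - y ∈ Submodule.span ℝ A) : y ∈ C := by
  obtain ⟨q, hqC, hq⟩ := exists_norm_eq_iInf_of_complete_convex ⟨c, hc⟩ hC.isComplete hCconv y
  have hvar := (norm_eq_iInf_iff_real_inner_le_zero hCconv hqC).1 hq
  have hqA : ∀ a ∈ A, ⟪q, a⟫_ℝ = 0 := fun a ha =>
    inner_eq_zero_of_inner_reflFun_sub_nonpos (hyA a ha) (hvar _ (hCA a ha hqC))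
  have hspan : Submodule.span ℝ A ≤ (ℝ ∙ (y - q))ᗮ := Submodule.span_le.2 fun a ha => by
    simp [Submodule.mem_orthogonal_singleton_iff_inner_right, inner_sub_left, hyA a ha, hqA a ha]
  have hyq : ⟪y - q, y - q⟫_ℝ ≤ 0 := by
    have h := hvar c hc
    rwa [show c - q = (c - y) + (y - q) by abel, inner_add_right,
      Submodule.mem_orthogonal_singleton_iff_inner_right.1 (hspan hcy), zero_add] at h
  rw [real_inner_self_nonpos, sub_eq_zero] at hyq
  exact hyq ▸ hqC

end Reflection

namespace RootSystemCtx

variable {ι E : Type} [Fintype ι] [DecidableEq ι] [NormedAddCommGroup E] [InnerProductSpace ℝ E]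
  (S : RootSystemCtx ι E)

theorem coweightPair_eq_coord (x : E) (i : ι) : S.coweightPair x i = S.simpleBasis.coord i x :=
  rfl

@[simp]
theorem coweightPair_add (x x' : E) (i : ι) :
    S.coweightPair (x + x') i = S.coweightPair x i + S.coweightPair x' i := by
  simp [coweightPair_eq_coord]

@[simp]
theorem coweightPair_sub (x x' : E) (i : ι) :
    S.coweightPair (x - x') i = S.coweightPair x i - S.coweightPair x' i := by
  simp [coweightPair_eq_coord]

@[simp]
theorem coweightPair_neg (x : E) (i : ι) : S.coweightPair (-x) i = -S.coweightPair x i := by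
  simp [coweightPair_eq_coord]

@[simp]
theorem coweightPair_smul (t : ℝ) (x : E) (i : ι) :
    S.coweightPair (t • x) i = t * S.coweightPair x i := by
  simp [coweightPair_eq_coord]

theorem simpleBasis_apply (i : ι) : S.simpleBasis i = S.simple i :=
  Module.Basis.mk_apply _ _ i

@[simp]
theorem coweightPair_simple (j i : ι) : S.coweightPair (S.simple j) i = if j = i then 1 else 0 := by
  rw [coweightPair, ← simpleBasis_apply, Module.Basis.repr_self, Finsupp.single_apply]

theorem coweightPair_sum_smul (c : ι → ℝ) (J : Finset ι) (i : ι) :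
    S.coweightPair (∑ j ∈ J, c j • S.simple j) i = if i ∈ J then c i else 0 := by
  rw [coweightPair_eq_coord, map_sum]
  simp only [map_smul, smul_eq_mul, ← coweightPair_eq_coord, coweightPair_simple, mul_ite,
    mul_one, mul_zero, Finset.sum_ite_eq']

theorem sum_coweightPair_smul (x : E) : ∑ i, S.coweightPair x i • S.simple i = x := by
  simpa [coweightPair, simpleBasis_apply] using S.simpleBasis.sum_repr x

theorem eq_zero_of_coweightPair_nonneg_of_nonpos {x : E} (h₁ : ∀ i, 0 ≤ S.coweightPair x i)
    (h₂ : ∀ i, S.coweightPair x i ≤ 0) : x = 0 := by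
  rw [← S.sum_coweightPair_smul x]
  exact Finset.sum_eq_zero fun i _ => by rw [le_antisymm (h₂ i) (h₁ i), zero_smul]

theorem coweightPair_simple_nonneg (i j : ι) : 0 ≤ S.coweightPair (S.simple i) j := by
  rw [coweightPair_simple]
  split_ifs <;> norm_num

theorem coweightPair_int_of_mem_rootLattice {x : E} (hx : x ∈ S.rootLattice) (i : ι) :
    ∃ m : ℤ, S.coweightPair x i = m := by
  induction hx using AddSubgroup.closure_induction with
  | mem a ha =>
    rcases S.pos_neg a ha with ⟨c, rfl⟩ | ⟨c, rfl⟩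
    · exact ⟨c i, by simp [S.coweightPair_sum_smul _ Finset.univ]⟩
    · exact ⟨-c i, by simp [S.coweightPair_sum_smul _ Finset.univ]⟩
  | zero => exact ⟨0, by simp [coweightPair_eq_coord]⟩
  | add a b _ _ iha ihb =>
    obtain ⟨m, hm⟩ := iha
    obtain ⟨n, hn⟩ := ihb
    exact ⟨m + n, by simp [hm, hn]⟩
  | neg a _ iha =>
    obtain ⟨m, hm⟩ := iha
    exact ⟨-m, by simp [hm]⟩

theorem coweightPair_root_nonneg_or_nonpos {β : E} (hβ : β ∈ S.Roots) :
    (∀ i, 0 ≤ S.coweightPair β i) ∨ (∀ i, S.coweightPair β i ≤ 0) := by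
  rcases S.pos_neg β hβ with ⟨c, rfl⟩ | ⟨c, rfl⟩
  · left; intro i; simp [S.coweightPair_sum_smul _ Finset.univ]
  · right; intro i; simp [S.coweightPair_sum_smul _ Finset.univ]

def weylElem (l : List ι) : E ≃ₗᵢ[ℝ] E :=
  (l.map fun i => (ℝ ∙ S.simple i)ᗮ.reflection).prod

theorem coe_weylElem (l : List ι) : ⇑(S.weylElem l) = S.wordAct l := by
  induction l with
  | nil => rfl
  | cons i l ih =>
    rw [weylElem, List.map_cons, List.prod_cons, LinearIsometryEquiv.coe_mul, ← weylElem, ih,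
      ← reflFun_eq_reflection]
    rfl

theorem wordAct_cons (i : ι) (l : List ι) :
    S.wordAct (i :: l) = reflFun (S.simple i) ∘ S.wordAct l :=
  rfl

theorem wordAct_append (l l' : List ι) : S.wordAct (l ++ l') = S.wordAct l ∘ S.wordAct l' := by
  induction l with
  | nil => rfl
  | cons i l ih => rw [List.cons_append, wordAct_cons, wordAct_cons, ih]; rfl

theorem wordAct_mem_roots (l : List ι) {β : E} (hβ : β ∈ S.Roots) : S.wordAct l β ∈ S.Roots := by
  induction l with
  | nil => exact hβ
  | cons i l ih => exact S.refl_stable _ ih _ (S.simple_mem i)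

theorem wordAct_reflFun (l : List ι) (β x : E) :
    S.wordAct l (reflFun β x) = reflFun (S.wordAct l β) (S.wordAct l x) := by
  simp only [reflFun, pairR, ← coe_weylElem, map_sub, map_smul, LinearIsometryEquiv.inner_map_map]

/-- `s_i` changes only the `i`-th coordinate, so if it made `β` negative then `β ∈ ℝ αᵢ`. -/
theorem coweightPair_reflFun_simple_nonneg (i : ι) {β : E} (hβ : β ∈ S.Roots)
    (hpos : ∀ j, 0 ≤ S.coweightPair β j) (hne : β ≠ S.simple i) (j : ι) :
    0 ≤ S.coweightPair (reflFun (S.simple i) β) j := by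
  refine (S.coweightPair_root_nonneg_or_nonpos
    (S.refl_stable β hβ _ (S.simple_mem i))).elim (· j) fun hneg => absurd ?_ hne
  have hcoord : ∀ j ≠ i, S.coweightPair β j = 0 := fun j hj => by
    have h := hneg j
    simp only [reflFun, coweightPair_sub, coweightPair_smul, coweightPair_simple,
      if_neg (Ne.symm hj), mul_zero, sub_zero] at h
    exact le_antisymm h (hpos j)
  have hβi : S.coweightPair β i • S.simple i = β :=
    (Finset.sum_eq_single i (fun j _ hj => by rw [hcoord j hj, zero_smul]) (by simp)).symm.trans
      (S.sum_coweightPair_smul β)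
  rcases S.reduced _ (S.simple_mem i) _ (by rwa [hβi]) with h | h
  · rw [← hβi, h, one_smul]
  · linarith [hpos i]

theorem exists_wordAct_eq_comp_reflFun (l : List ι) {β : E} (hβ : β ∈ S.Roots)
    (hpos : ∀ j, 0 ≤ S.coweightPair β j) (hneg : ∀ j, S.coweightPair (S.wordAct l β) j ≤ 0) :
    ∃ l' : List ι, l'.length + 1 = l.length ∧ S.wordAct l' = S.wordAct l ∘ reflFun β := by
  induction l with
  | nil => exact absurd (S.eq_zero_of_coweightPair_nonneg_of_nonpos hpos hneg) (S.ne_zero β hβ)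
  | cons i l ih =>
    have hγ := S.wordAct_mem_roots l hβ
    rcases S.coweightPair_root_nonneg_or_nonpos hγ with hγpos | hγneg
    · have hγi : S.wordAct l β = S.simple i := by
        by_contra hne
        exact S.ne_zero _ (S.refl_stable _ hγ _ (S.simple_mem i))
          (S.eq_zero_of_coweightPair_nonneg_of_nonpos
            (S.coweightPair_reflFun_simple_nonneg i hγ hγpos hne) hneg)
      refine ⟨l, rfl, funext fun x => ?_⟩
      simp only [wordAct_cons, Function.comp_apply, S.wordAct_reflFun, hγi, reflFun_reflFun]
    · obtain ⟨l', hlen, hl'⟩ := ih hγneg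
      exact ⟨i :: l', by simp [hlen], by rw [wordAct_cons, hl']; rfl⟩

/-- Among words for `w`, take one of minimal length `l₀ ++ [i₀]`: the exchange lemma forces
`w₀ α_{i₀} ≥ 0`, whence `w μ = w₀ μ - ⟨μ, α_{i₀}∨⟩ w₀ α_{i₀} ≤ w₀ μ`. -/
theorem coweightPair_wordAct_le {μ : E} (hμ : S.IsDominant μ) (l : List ι) (i : ι) :
    S.coweightPair (S.wordAct l μ) i ≤ S.coweightPair μ i := by
  induction hn : l.length using Nat.strong_induction_on generalizing l with
  | _ n ih =>
  by_cases hshort : ∃ l' : List ι, l'.length < l.length ∧ S.wordAct l' = S.wordAct l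
  · obtain ⟨l', hlt, hl'⟩ := hshort
    rw [← hl']
    exact ih _ (hn ▸ hlt) l' rfl
  rcases List.eq_nil_or_concat' l with rfl | ⟨l₀, i₀, rfl⟩
  · exact le_rfl
  have hpos (j : ι) : 0 ≤ S.coweightPair (S.wordAct l₀ (S.simple i₀)) j := by
    refine (S.coweightPair_root_nonneg_or_nonpos (S.wordAct_mem_roots l₀ (S.simple_mem i₀))).elim
      (· j) fun hneg => (hshort ?_).elim
    obtain ⟨l', hlen, hl'⟩ := S.exists_wordAct_eq_comp_reflFun l₀ (S.simple_mem i₀)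
      (S.coweightPair_simple_nonneg i₀) hneg
    refine ⟨l', ?_, by rw [hl', wordAct_append]; rfl⟩
    rw [List.length_append, List.length_singleton]
    omega
  have hsplit : S.wordAct (l₀ ++ [i₀]) μ
      = S.wordAct l₀ μ - pairR μ (S.simple i₀) • S.wordAct l₀ (S.simple i₀) := by
    rw [wordAct_append, Function.comp_apply, ← coe_weylElem]
    exact (S.weylElem l₀).map_sub _ _ |>.trans (by rw [map_smul]; rfl)
  have hl₀ := ih l₀.length (by simp [← hn]) l₀ rfl
  rw [hsplit, coweightPair_sub, coweightPair_smul]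
  nlinarith [hμ i₀, hpos i]

theorem mapsTo_wordAct_closure_convexHull_weylOrbit (l : List ι) (μ : E) :
    Set.MapsTo (S.wordAct l) (closure (convexHull ℝ (S.weylOrbit μ)))
      (closure (convexHull ℝ (S.weylOrbit μ))) := by
  rw [← coe_weylElem]
  refine Set.MapsTo.closure ?_ (S.weylElem l).continuous
  have hlin := (S.weylElem l).toLinearEquiv.toLinearMap.image_convexHull (S.weylOrbit μ)
  rw [Set.mapsTo_iff_image_subset]
  refine hlin.trans_subset (convexHull_mono ?_)
  rintro _ ⟨_, ⟨l', rfl⟩, rfl⟩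
  exact ⟨l ++ l', by simp [wordAct_append, coe_weylElem]⟩

theorem coweightPair_le_of_mem_closure_convexHull_weylOrbit {μ : E} (hμ : S.IsDominant μ) {x : E}
    (hx : x ∈ closure (convexHull ℝ (S.weylOrbit μ))) (i : ι) :
    S.coweightPair x i ≤ S.coweightPair μ i := by
  have : FiniteDimensional ℝ E := S.simpleBasis.finiteDimensional_of_finite
  let f := S.simpleBasis.coord i
  have hclosed : IsClosed {v | f v ≤ f μ} :=
    isClosed_Iic.preimage f.continuous_of_finiteDimensional
  refine closure_minimal (convexHull_min ?_ (convex_halfSpace_le f.isLinear (f μ))) hclosed hx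
  rintro _ ⟨l, rfl⟩
  exact S.coweightPair_wordAct_le hμ l i

theorem mem_closure_convexHull_weylOrbit_of_sub_mem_span {μ y c : E} {J : Finset ι}
    (hyJ : ∀ j ∈ J, ⟪y, S.simple j⟫_ℝ = 0) (hc : c ∈ convexHull ℝ (S.weylOrbit μ))
    (hcy : c - y ∈ Submodule.span ℝ (S.simple '' ↑J)) :
    y ∈ closure (convexHull ℝ (S.weylOrbit μ)) := by
  have : FiniteDimensional ℝ E := S.simpleBasis.finiteDimensional_of_finite
  refine mem_of_reflFun_mapsTo isClosed_closure (convex_convexHull ℝ _).closure ?_ ?_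
    (subset_closure hc) hcy
  · rintro _ ⟨j, -, rfl⟩
    exact S.mapsTo_wordAct_closure_convexHull_weylOrbit [j] μ
  · rintro _ ⟨j, hj, rfl⟩
    exact hyJ j hj

end RootSystemCtx

theorem zPrime_mem_cone_general
    {ι E : Type} [Fintype ι] [DecidableEq ι]
    [NormedAddCommGroup E] [InnerProductSpace ℝ E]
    (S : RootSystemCtx ι E)
    (μ : E) (hμdom : S.IsDominant μ)
    (J : Finset ι)
    (y : E) (hyorth : ∀ j ∈ J, (inner ℝ y (S.simple j) : ℝ) = 0)
    (hyconv : ∃ c ∈ convexHull ℝ (S.weylOrbit μ),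
      c - y ∈ Submodule.span ℝ (S.simple '' ↑J))
    (k : ι → ℝ)
    (z : E) (hz : z = y + ∑ j ∈ J, k j • S.simple j)
    (hsame : z - μ ∈ S.rootLattice)
    (z' : E) (hz' : z' = y + ∑ j ∈ J, Int.fract (k j) • S.simple j) :
    ∀ i, S.coweightPair z' i ≤ S.coweightPair μ i := by
  intro i
  obtain ⟨c, hc, hcy⟩ := hyconv
  have hy : S.coweightPair y i ≤ S.coweightPair μ i :=
    S.coweightPair_le_of_mem_closure_convexHull_weylOrbit hμdom
      (S.mem_closure_convexHull_weylOrbit_of_sub_mem_span hyorth hc hcy) i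
  rw [hz', S.coweightPair_add, S.coweightPair_sum_smul]
  split_ifs with hi
  · obtain ⟨m, hm⟩ := S.coweightPair_int_of_mem_rootLattice hsame i
    rw [hz, S.coweightPair_sub, S.coweightPair_add, S.coweightPair_sum_smul, if_pos hi] at hm
    have hint : S.coweightPair y i + Int.fract (k i) - S.coweightPair μ i = (m - ⌊k i⌋ : ℤ) := by
      rw [Int.fract, Int.cast_sub, ← hm]
      ring
    have hlt : ((m - ⌊k i⌋ : ℤ) : ℝ) < 1 := by
      rw [← hint]
      linarith [Int.fract_lt_one (k i)]
    have hnonpos : ((m - ⌊k i⌋ : ℤ) : ℝ) ≤ 0 := by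
      exact_mod_cast Int.lt_add_one_iff.1 (by exact_mod_cast hlt)
    linarith
  · rwa [add_zero]

/-- With the standing data of the paper (`μ ∈ P(R)` dominant;
`y` a dominant element of `P(R)/Q(R_J)` identified with an element of the
orthogonal complement of `span_ℝ {α_j : j ∈ J}`, with the same image as `μ` in
`P(R)/Q(R)` and whose image in `(P(R)/Q(R_J))⊗ℝ` lies in `pr_J(Conv(Wμ))`;
`z = y + ∑_{j∈J} k_j α_j` the unique `J`-minuscule `J`-dominant weight with
`φ_J(z) = y`, `k_j ≥ 0`; `z' = y + ∑_{j∈J} (k_j - ⌊k_j⌋) α_j`):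
the element `z'` lies in the cone `C⁺_μ`, i.e. `⟨z', ωᵢ⟩ ≤ ⟨μ, ωᵢ⟩` for all
`i ∈ I`. -/
theorem zPrime_mem_cone
    {ι E : Type} [Fintype ι] [DecidableEq ι]
    [NormedAddCommGroup E] [InnerProductSpace ℝ E]
    (S : RootSystemCtx ι E)
    (μ : E) (hμW : S.IsWeight μ) (hμdom : S.IsDominant μ)
    (J : Finset ι) (hJne : J.Nonempty) (hJprop : J ≠ Finset.univ)
    (y : E) (hyorth : ∀ j ∈ J, (inner ℝ y (S.simple j) : ℝ) = 0)
    (hydom : S.IsDominant y)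
    (hyconv : ∃ c ∈ convexHull ℝ (S.weylOrbit μ),
      c - y ∈ Submodule.span ℝ (S.simple '' ↑J))
    (k : ι → ℝ) (hk : ∀ j ∈ J, 0 ≤ k j)
    (z : E) (hz : z = y + ∑ j ∈ J, k j • S.simple j)
    (hzW : S.IsWeight z) (hzmin : S.IsJMinuscule J z) (hzdom : S.IsJDominant J z)
    (hzuniq : ∀ z₀ : E, S.IsWeight z₀ → S.IsJMinuscule J z₀ → S.IsJDominant J z₀ →
      z₀ - z ∈ Submodule.span ℝ (S.simple '' ↑J) → z₀ = z)
    (hsame : z - μ ∈ S.rootLattice)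
    (z' : E) (hz' : z' = y + ∑ j ∈ J, Int.fract (k j) • S.simple j) :
    ∀ i, S.coweightPair z' i ≤ S.coweightPair μ i :=
  zPrime_mem_cone_general S μ hμdom J y hyorth hyconv k z hz hsame z' hz'
end
end

section
/- For every β ∈ R⁺∖R_J the following hold: (−β)_J lies in ℳ_J; the function u ↦ ⟨u, β∨⟩ on ℳ_J attains its minimum at u = (−β)_J, i.e. ⟨u, β∨⟩ ≥ ⟨(−β)_J, β∨⟩ for all u ∈ ℳ_J; and ⟨(−β)_J, β∨⟩ > −2. -/
/-!
Common setup: an abstract reduced irreducible crystallographic root system `R`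
inside a real inner product space `E`, with simple roots `α i` (`i : ι`) forming
a basis of `E`, Weyl group generated by the reflections in the roots
(equivalently, by the simple reflections), coroot pairing
`⟨x, a∨⟩ = 2 (x, a) / (a, a)`, weight lattice `P(R)`, root lattices `Q(R)`,
`Q(R_J)`, etc.
-/

open scoped BigOperators

noncomputable section

/-!
Let `b` be the projection of `β` onto `V = span R_J`, so that `(-β)_J = -b`. For `α ∈ R_J`,
`⟨b, α∨⟩ = ⟨β, α∨⟩ ∈ {-1, 0, 1}` by simple lacing, and `|b| < |β|` because `β ∉ V`; this gives
the first and the last claim. For the minimum one needs `(u, b) ≥ -(b, b)` for `u ∈ ℳ_J`.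

The operator `T x = ∑_{γ ∈ R_J} (x, γ) γ` (`casimir`) commutes with every reflection `s_δ`,
`δ ∈ R_J`, so each root `γ`, which spans the `-1`-eigenspace of `s_γ`, is an eigenvector of `T`
with eigenvalue `λ_γ > 0`; as `T` is symmetric, roots with `(γ, δ) ≠ 0` share their eigenvalue.
Hence `b = ∑_γ ((b, γ) / λ_γ) γ` on `V`, so `(u, b) = ∑_γ (b, γ) (u, γ) / λ_γ`, and each term is
at least `-(b, γ)² / λ_γ` because `⟨b, γ∨⟩ ∈ {-1, 0, 1}` and `⟨u, γ∨⟩ ∈ [-1, 1]`. These bounds sum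
to `-(b, b)`.
-/

open scoped RealInnerProductSpace

section Pairing

variable {E : Type} [NormedAddCommGroup E] [InnerProductSpace ℝ E]

lemma reflection_orthogonal_span_singleton_apply (a x : E) :
    (ℝ ∙ a)ᗮ.reflection x = reflFun a x := by
  rw [Submodule.reflection_orthogonal_apply, Submodule.reflection_singleton_apply, reflFun,
    pairR, real_inner_comm x a]
  simp only [RCLike.ofReal_real_eq_id, id_eq, ← real_inner_self_eq_norm_sq]
  module

lemma reflFun_self {a : E} (ha : a ≠ 0) : reflFun a a = -a := by
  have haa : ⟪a, a⟫ ≠ 0 := inner_self_ne_zero.2 ha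
  rw [reflFun, pairR, mul_div_assoc, div_self haa, mul_one, two_smul]
  abel

lemma eq_smul_of_reflFun_eq_neg {a x : E} (h : reflFun a x = -x) :
    x = (⟪x, a⟫ / ⟪a, a⟫) • a := by
  rw [reflFun, pairR] at h
  linear_combination (norm := module) (2⁻¹ : ℝ) • h

lemma pairR_neg_left (x a : E) : pairR (-x) a = -pairR x a := by
  rw [pairR, pairR, inner_neg_left]; ring

lemma pairR_le_pairR_of_inner_le {x y a : E} (h : ⟪x, a⟫ ≤ ⟪y, a⟫) : pairR x a ≤ pairR y a :=
  div_le_div_of_nonneg_right (by linarith) real_inner_self_nonneg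

lemma inner_eq_pairR_mul {a : E} (ha : a ≠ 0) (x : E) : ⟪x, a⟫ = pairR x a * ⟪a, a⟫ / 2 := by
  have haa : ⟪a, a⟫ ≠ 0 := inner_self_ne_zero.2 ha
  rw [pairR]
  field_simp

lemma neg_inner_sq_le_inner_mul_inner {x y a : E} (ha : a ≠ 0)
    (hx : pairR x a = -1 ∨ pairR x a = 0 ∨ pairR x a = 1) (hy : -1 ≤ pairR y a ∧ pairR y a ≤ 1) :
    -⟪x, a⟫ ^ 2 ≤ ⟪x, a⟫ * ⟪y, a⟫ := by
  have haa : 0 < ⟪a, a⟫ := real_inner_self_pos.2 ha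
  have hxy : -pairR x a ^ 2 ≤ pairR x a * pairR y a := by
    rcases hx with h | h | h <;> rw [h] <;> linarith [hy.1, hy.2]
  rw [inner_eq_pairR_mul ha x, inner_eq_pairR_mul ha y]
  nlinarith [mul_pos haa haa]

namespace Submodule

variable (K : Submodule ℝ E) [K.HasOrthogonalProjection]

lemma inner_starProjection_right_of_mem {x : E} (hx : x ∈ K) (y : E) :
    ⟪x, K.starProjection y⟫ = ⟪x, y⟫ := by
  rw [← K.inner_starProjection_left_eq_right, K.starProjection_eq_self_iff.2 hx]

lemma pairR_starProjection {a : E} (ha : a ∈ K) (x : E) :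
    pairR (K.starProjection x) a = pairR x a := by
  rw [pairR, pairR, real_inner_comm, K.inner_starProjection_right_of_mem ha, real_inner_comm]

lemma neg_two_lt_pairR_neg_starProjection {β : E} (hβ : β ∉ K) :
    -2 < pairR (-K.starProjection β) β := by
  have hβ0 : β ≠ 0 := fun h => hβ (h ▸ K.zero_mem)
  have hlt : ‖K.starProjection β‖ < ‖β‖ :=
    (K.norm_starProjection_apply_le β).lt_of_ne fun h => hβ ((K.mem_iff_norm_starProjection β).2 h)
  have hself : ⟪K.starProjection β, β⟫ = ‖K.starProjection β‖ ^ 2 := by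
    simpa using K.re_inner_starProjection_eq_normSq β
  rw [pairR_neg_left, pairR, hself, real_inner_self_eq_norm_sq, neg_lt_neg_iff,
    div_lt_iff₀ (by positivity)]
  nlinarith [norm_nonneg (K.starProjection β)]

end Submodule

end Pairing

section Casimir

variable {E : Type} [NormedAddCommGroup E] [InnerProductSpace ℝ E]

def casimir (Φ : Finset E) (x : E) : E := ∑ γ ∈ Φ, ⟪x, γ⟫ • γ

lemma inner_casimir_left (Φ : Finset E) (x y : E) :
    ⟪casimir Φ x, y⟫ = ∑ γ ∈ Φ, ⟪x, γ⟫ * ⟪γ, y⟫ := by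
  simp only [casimir, sum_inner, real_inner_smul_left]

lemma inner_casimir_comm (Φ : Finset E) (x y : E) : ⟪casimir Φ x, y⟫ = ⟪x, casimir Φ y⟫ := by
  rw [inner_casimir_left, real_inner_comm, inner_casimir_left]
  exact Finset.sum_congr rfl fun γ _ => by rw [real_inner_comm x γ, real_inner_comm y γ, mul_comm]

lemma reflection_casimir {Φ : Finset E} (hΦ : ∀ γ ∈ Φ, ∀ δ ∈ Φ, reflFun δ γ ∈ Φ) {δ : E}
    (hδ : δ ∈ Φ) (x : E) :
    (ℝ ∙ δ)ᗮ.reflection (casimir Φ x) = casimir Φ ((ℝ ∙ δ)ᗮ.reflection x) := by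
  set r := (ℝ ∙ δ)ᗮ.reflection
  have hr : ∀ γ ∈ Φ, r γ ∈ Φ := fun γ hγ => by
    rw [reflection_orthogonal_span_singleton_apply]; exact hΦ γ hγ δ hδ
  rw [casimir, casimir, map_sum]
  refine Finset.sum_nbij' r r hr hr (fun γ _ => Submodule.reflection_reflection _ γ)
    (fun γ _ => Submodule.reflection_reflection _ γ) fun γ _ => ?_
  rw [map_smul, LinearIsometryEquiv.inner_map_map]

def casimirEigenvalue (Φ : Finset E) (γ : E) : ℝ := ⟪casimir Φ γ, γ⟫ / ⟪γ, γ⟫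

variable {Φ : Finset E}

lemma casimir_eq_casimirEigenvalue_smul (hΦ : ∀ γ ∈ Φ, ∀ δ ∈ Φ, reflFun δ γ ∈ Φ) {γ : E}
    (hγ : γ ∈ Φ) (hγ0 : γ ≠ 0) : casimir Φ γ = casimirEigenvalue Φ γ • γ := by
  apply eq_smul_of_reflFun_eq_neg
  rw [← reflection_orthogonal_span_singleton_apply, reflection_casimir hΦ hγ,
    reflection_orthogonal_span_singleton_apply, reflFun_self hγ0, casimir, casimir]
  simp only [inner_neg_left, neg_smul, Finset.sum_neg_distrib]

lemma casimirEigenvalue_pos {γ : E} (hγ : γ ∈ Φ) (hγ0 : γ ≠ 0) : 0 < casimirEigenvalue Φ γ := by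
  have hγγ : 0 < ⟪γ, γ⟫ := real_inner_self_pos.2 hγ0
  refine div_pos ?_ hγγ
  rw [inner_casimir_left]
  calc 0 < ⟪γ, γ⟫ * ⟪γ, γ⟫ := mul_pos hγγ hγγ
    _ ≤ ∑ δ ∈ Φ, ⟪γ, δ⟫ * ⟪δ, γ⟫ :=
      Finset.single_le_sum (f := fun δ => ⟪γ, δ⟫ * ⟪δ, γ⟫)
        (fun δ _ => by rw [real_inner_comm δ γ]; exact mul_self_nonneg _) hγ

lemma casimirEigenvalue_eq_of_inner_ne_zero (hΦ : ∀ γ ∈ Φ, ∀ δ ∈ Φ, reflFun δ γ ∈ Φ)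
    {γ δ : E} (hγ : γ ∈ Φ) (hδ : δ ∈ Φ) (hγ0 : γ ≠ 0) (hδ0 : δ ≠ 0) (h : ⟪γ, δ⟫ ≠ 0) :
    casimirEigenvalue Φ γ = casimirEigenvalue Φ δ := by
  have := inner_casimir_comm Φ γ δ
  rw [casimir_eq_casimirEigenvalue_smul hΦ hγ hγ0, casimir_eq_casimirEigenvalue_smul hΦ hδ hδ0,
    real_inner_smul_left, real_inner_smul_right] at this
  exact mul_right_cancel₀ h this

lemma sum_inner_div_casimirEigenvalue_smul (h0 : ∀ γ ∈ Φ, γ ≠ 0)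
    (hΦ : ∀ γ ∈ Φ, ∀ δ ∈ Φ, reflFun δ γ ∈ Φ) {b : E} (hb : b ∈ Submodule.span ℝ (Φ : Set E)) :
    ∑ γ ∈ Φ, (⟪b, γ⟫ / casimirEigenvalue Φ γ) • γ = b := by
  induction hb using Submodule.span_induction with
  | mem δ hδ =>
    have hδ : δ ∈ Φ := hδ
    calc ∑ γ ∈ Φ, (⟪δ, γ⟫ / casimirEigenvalue Φ γ) • γ
        = (casimirEigenvalue Φ δ)⁻¹ • casimir Φ δ := by
          rw [casimir, Finset.smul_sum]
          refine Finset.sum_congr rfl fun γ hγ => ?_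
          rw [smul_smul]
          rcases eq_or_ne ⟪δ, γ⟫ 0 with h | h
          · simp [h]
          · rw [casimirEigenvalue_eq_of_inner_ne_zero hΦ hγ hδ (h0 γ hγ) (h0 δ hδ)
              (by rwa [real_inner_comm]), div_eq_inv_mul]
      _ = δ := by
          rw [casimir_eq_casimirEigenvalue_smul hΦ hδ (h0 δ hδ), smul_smul,
            inv_mul_cancel₀ (casimirEigenvalue_pos hδ (h0 δ hδ)).ne', one_smul]
  | zero => simp
  | add x y _ _ hx hy =>
    simp only [inner_add_left, add_div, add_smul, Finset.sum_add_distrib, hx, hy]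
  | smul c x _ hx =>
    simp only [real_inner_smul_left, mul_div_assoc, ← smul_smul, ← Finset.smul_sum, hx]

lemma neg_inner_self_le_inner_of_forall_neg_sq_le (h0 : ∀ γ ∈ Φ, γ ≠ 0)
    (hΦ : ∀ γ ∈ Φ, ∀ δ ∈ Φ, reflFun δ γ ∈ Φ) {b : E} (hb : b ∈ Submodule.span ℝ (Φ : Set E))
    (u : E) (hu : ∀ γ ∈ Φ, -⟪b, γ⟫ ^ 2 ≤ ⟪b, γ⟫ * ⟪u, γ⟫) : -⟪b, b⟫ ≤ ⟪u, b⟫ := by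
  have expand : ∀ x, ⟪x, b⟫ = ∑ γ ∈ Φ, ⟪b, γ⟫ / casimirEigenvalue Φ γ * ⟪x, γ⟫ := fun x => by
    conv_lhs => rw [← sum_inner_div_casimirEigenvalue_smul h0 hΦ hb]
    simp only [inner_sum, real_inner_smul_right]
  rw [expand, expand, ← Finset.sum_neg_distrib]
  refine Finset.sum_le_sum fun γ hγ => ?_
  have hpos := casimirEigenvalue_pos hγ (h0 γ hγ)
  rw [div_mul_eq_mul_div, div_mul_eq_mul_div, ← neg_div, div_le_div_iff_of_pos_right hpos]
  nlinarith [hu γ hγ]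

end Casimir

namespace RootSystemCtx

variable {ι E : Type} [Fintype ι] [DecidableEq ι] [NormedAddCommGroup E] [InnerProductSpace ℝ E]
  (S : RootSystemCtx ι E) (J : Finset ι)

lemma reflFun_mem_RootsJ {a b : E} (ha : a ∈ S.RootsJ J) (hb : b ∈ S.RootsJ J) :
    reflFun b a ∈ S.RootsJ J :=
  ⟨S.refl_stable a ha.1 b hb.1, Submodule.sub_mem _ ha.2 (Submodule.smul_mem _ _ hb.2)⟩

lemma neg_mem_RootsJ {a : E} (ha : a ∈ S.RootsJ J) : -a ∈ S.RootsJ J :=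
  reflFun_self (S.ne_zero a ha.1) ▸ S.reflFun_mem_RootsJ J ha ha

lemma span_simple_le_span_RootsJ :
    Submodule.span ℝ (S.simple '' ↑J) ≤ Submodule.span ℝ (S.RootsJ J) :=
  Submodule.span_mono <| Set.image_subset_iff.2 fun j hj =>
    ⟨S.simple_mem j, Submodule.subset_span ⟨j, hj, rfl⟩⟩

lemma pairR_mem_of_notMem_RootsJ (hSL : S.SimplyLaced) {β a : E} (hβ : β ∈ S.Roots)
    (hβJ : β ∉ S.RootsJ J) (ha : a ∈ S.RootsJ J) :
    pairR β a = -1 ∨ pairR β a = 0 ∨ pairR β a = 1 :=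
  hSL β hβ a ha.1 (fun h => hβJ (h ▸ ha))
    (fun h => hβJ (by simpa [h] using S.neg_mem_RootsJ J ha))

lemma neg_inner_self_le_inner_of_mem_span_RootsJ {b : E}
    (hb : b ∈ Submodule.span ℝ (S.RootsJ J)) (u : E)
    (hu : ∀ γ ∈ S.RootsJ J, -⟪b, γ⟫ ^ 2 ≤ ⟪b, γ⟫ * ⟪u, γ⟫) : -⟪b, b⟫ ≤ ⟪u, b⟫ := by
  have hΦ : (S.RootsJ J).Finite := S.finite.subset fun _ ha => ha.1
  simp_rw [← hΦ.mem_toFinset] at hu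
  refine neg_inner_self_le_inner_of_forall_neg_sq_le (Φ := hΦ.toFinset)
    (fun γ hγ => S.ne_zero γ (hΦ.mem_toFinset.1 hγ).1) (fun γ hγ δ hδ => ?_)
    (by rwa [hΦ.coe_toFinset]) u hu
  rw [hΦ.mem_toFinset] at hγ hδ ⊢
  exact S.reflFun_mem_RootsJ J hγ hδ

end RootSystemCtx

theorem projection_minimizes_pairing_general
    {ι E : Type} [Fintype ι] [DecidableEq ι]
    [NormedAddCommGroup E] [InnerProductSpace ℝ E] [FiniteDimensional ℝ E]
    (S : RootSystemCtx ι E) (hSL : S.SimplyLaced)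
    (J : Finset ι)
    (β : E) (hβpos : S.IsPositiveRoot β) (hβJ : β ∉ S.RootsJ J)
    (MJ : Set E)
    (hMJ : MJ = {v : E | v ∈ Submodule.span ℝ (S.simple '' ↑J) ∧
      ∀ a ∈ S.RootsJ J, -1 ≤ pairR v a ∧ pairR v a ≤ 1})
    (mβ : E)
    (hmβ : mβ = (Submodule.orthogonalProjectionOnto (Submodule.span ℝ (S.simple '' ↑J)) (-β) : E)) :
    mβ ∈ MJ ∧ (∀ u ∈ MJ, pairR mβ β ≤ pairR u β) ∧ -2 < pairR mβ β := by
  set V := Submodule.span ℝ (S.simple '' ↑J)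
  set b := V.starProjection β
  have hmβb : mβ = -b := by rw [hmβ, ← V.starProjection_apply, map_neg]
  have hbV : b ∈ V := V.starProjection_apply_mem β
  have hbJ (a : E) (ha : a ∈ S.RootsJ J) : pairR b a = -1 ∨ pairR b a = 0 ∨ pairR b a = 1 := by
    rw [V.pairR_starProjection ha.2]
    exact S.pairR_mem_of_notMem_RootsJ J hSL hβpos.1 hβJ ha
  subst hMJ hmβb
  refine ⟨⟨V.neg_mem hbV, fun a ha => ?_⟩, fun u ⟨huV, hu⟩ => ?_,
    V.neg_two_lt_pairR_neg_starProjection fun h => hβJ ⟨hβpos.1, h⟩⟩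
  · rw [pairR_neg_left]
    rcases hbJ a ha with h | h | h <;> rw [h] <;> norm_num
  · have key : -⟪b, b⟫ ≤ ⟪u, b⟫ :=
      S.neg_inner_self_le_inner_of_mem_span_RootsJ J (S.span_simple_le_span_RootsJ J hbV) u
        fun γ hγ => neg_inner_sq_le_inner_mul_inner (S.ne_zero γ hγ.1) (hbJ γ hγ) (hu γ hγ)
    apply pairR_le_pairR_of_inner_le
    rwa [inner_neg_left, ← V.inner_starProjection_right_of_mem hbV,
      ← V.inner_starProjection_right_of_mem huV]

/-- (simply-laced case) For every positive root
`β ∈ R⁺ \ R_J`: the orthogonal projection `(-β)_J` of `-β` onto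
`Q(R_J) ⊗ ℝ = span_ℝ {α_j : j ∈ J}` lies in
`ℳ_J = {v ∈ Q(R_J)⊗ℝ : ⟨v, α∨⟩ ∈ [-1,1] for all α ∈ R_J}`; the function
`u ↦ ⟨u, β∨⟩` on `ℳ_J` attains its minimum at `(-β)_J`; and
`⟨(-β)_J, β∨⟩ > -2`. -/
theorem projection_minimizes_pairing
    {ι E : Type} [Fintype ι] [DecidableEq ι]
    [NormedAddCommGroup E] [InnerProductSpace ℝ E] [FiniteDimensional ℝ E]
    (S : RootSystemCtx ι E) (hSL : S.SimplyLaced)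
    (J : Finset ι) (hJne : J.Nonempty) (hJprop : J ≠ Finset.univ)
    (β : E) (hβpos : S.IsPositiveRoot β) (hβJ : β ∉ S.RootsJ J)
    (MJ : Set E)
    (hMJ : MJ = {v : E | v ∈ Submodule.span ℝ (S.simple '' ↑J) ∧
      ∀ a ∈ S.RootsJ J, -1 ≤ pairR v a ∧ pairR v a ≤ 1})
    (mβ : E)
    (hmβ : mβ = (Submodule.orthogonalProjectionOnto (Submodule.span ℝ (S.simple '' ↑J)) (-β) : E)) :
    mβ ∈ MJ ∧ (∀ u ∈ MJ, pairR mβ β ≤ pairR u β) ∧ -2 < pairR mβ β :=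
  projection_minimizes_pairing_general S hSL J β hβpos hβJ MJ hMJ mβ hmβ
end
end

section
/- Let μ, ν ∈ Y. Then ν ≤_G μ if and only if ν ≤_H μ. -/
/-!
Common setup: an abstract reduced irreducible crystallographic root system `R`
inside a real inner product space `E`, with simple roots `α i` (`i : ι`) forming
a basis of `E`, Weyl group generated by the reflections in the roots
(equivalently, by the simple reflections), coroot pairing
`⟨x, a∨⟩ = 2 (x, a) / (a, a)`, weight lattice `P(R)`, root lattices `Q(R)`,
`Q(R_J)`, etc.
-/

open scoped BigOperators

noncomputable section

/-!
Folding setup: `X` is the cocharacter lattice of a split adjoint group with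
(simply-laced) root system `R` = `S.Roots`; since `E` is self-dual via the
inner product, coroots live in `E` and the pairing `⟨α, x⟩` of a root with a
cocharacter is the inner product. `θ` is a finite-order linear isometry of `E`
preserving `X` and permuting the simple coroots (via a permutation `π` of the
index set), such that distinct roots in the same `⟨θ⟩`-orbit of a simple root
are orthogonal. `Y = X^θ`, and the simple coroots of the folded system `H` are
the orbit sums `N(α∨)`, for `α` in a set `ℛ` of orbit representatives. The
Weyl group `W_H` of `H` is identified with the subgroup of `θ`-fixed elements
of `W`, i.e. those `w ∈ W` commuting with `θ`.
-/

/-- the coroot `a∨ = 2a/(a,a)` of `a`. -/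
def corootOf {E : Type} [NormedAddCommGroup E] [InnerProductSpace ℝ E] (a : E) : E :=
  (2 / (inner ℝ a a : ℝ)) • a

/-- the orbit of `i` under the permutation `π` (i.e. under `⟨θ⟩`). -/
def orbitOf {ι : Type} (π : Equiv.Perm ι) (i : ι) : Set ι := {j | ∃ k : ℕ, (π ^ k) i = j}

/-- `N(α∨) = ∑_{γ ∈ ⟨θ⟩-orbit of α} γ∨`, a simple coroot of the folded system. -/
def Ncoroot {ι E : Type} [Fintype ι] [DecidableEq ι]
    [NormedAddCommGroup E] [InnerProductSpace ℝ E]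
    (S : RootSystemCtx ι E) (π : Equiv.Perm ι) (i : ι) : E :=
  ∑ᶠ j ∈ orbitOf π i, corootOf (S.simple j)

/-!
The isometry `θ` permutes the simple coroots as `π` permutes the indices, and the simple
coroots are linearly independent, so the coefficients of a `θ`-fixed combination
`∑ cᵢ αᵢ∨` are constant on `π`-orbits; such a combination regroups orbit by orbit into
`∑_{i ∈ ℛ} cᵢ N(αᵢ∨)`. Conversely, spreading each coefficient `dᵢ` over the orbit of `i`
rewrites `∑_{i ∈ ℛ} dᵢ N(αᵢ∨)` as a combination of the `αⱼ∨`.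
-/

open Finset

theorem LinearIndependent.corootOf {ι E : Type} [NormedAddCommGroup E] [InnerProductSpace ℝ E]
    {v : ι → E} (hv : LinearIndependent ℝ v) : LinearIndependent ℝ fun i => corootOf (v i) := by
  have hunit : ∀ i, IsUnit (2 / (inner ℝ (v i) (v i) : ℝ)) := fun i =>
    (div_ne_zero two_ne_zero (inner_self_ne_zero.mpr (hv.ne_zero i))).isUnit
  exact hv.units_smul fun i => (hunit i).unit

theorem LinearIsometryEquiv.map_corootOf {E F : Type} [NormedAddCommGroup E]
    [InnerProductSpace ℝ E] [NormedAddCommGroup F] [InnerProductSpace ℝ F]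
    (θ : E ≃ₗᵢ[ℝ] F) (a : E) : θ (corootOf a) = corootOf (θ a) := by
  rw [corootOf, corootOf, map_smul, θ.inner_map_map]

theorem LinearIndependent.apply_perm_eq_of_sum_smul_comp_perm_eq {ι R M : Type*} [Fintype ι]
    [Semiring R] [AddCommMonoid M] [Module R M] {v : ι → M} (hv : LinearIndependent R v)
    (π : Equiv.Perm ι) {c : ι → R} (h : ∑ i, c i • v (π i) = ∑ i, c i • v i) (i : ι) :
    c (π i) = c i := by
  have h' : ∑ j, c (π.symm j) • v j = ∑ j, c j • v j := by
    rw [← h, ← Equiv.sum_comp π]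
    simp
  simpa using (Fintype.linearIndependent_iffₛ.mp hv _ _ h' (π i)).symm

theorem apply_eq_of_mem_orbitOf {ι : Type} {β : Type*} {π : Equiv.Perm ι} {c : ι → β}
    (hc : ∀ i, c (π i) = c i) {i j : ι} (hj : j ∈ orbitOf π i) : c j = c i := by
  obtain ⟨k, rfl⟩ := hj
  rw [Equiv.Perm.coe_pow]
  exact congrFun (Function.iterate_invariant (funext hc) k) i

section OrbitTransversal

variable {ι : Type} {π : Equiv.Perm ι} {ℛ : Finset ι}

def IsOrbitTransversal (π : Equiv.Perm ι) (ℛ : Finset ι) : Prop :=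
  ∀ j, ∃! i, i ∈ ℛ ∧ j ∈ orbitOf π i

def IsOrbitTransversal.rep (hℛ : IsOrbitTransversal π ℛ) (j : ι) : ι :=
  (hℛ j).exists.choose

namespace IsOrbitTransversal

theorem rep_mem (hℛ : IsOrbitTransversal π ℛ) (j : ι) : hℛ.rep j ∈ ℛ :=
  (hℛ j).exists.choose_spec.1

theorem mem_orbitOf_rep (hℛ : IsOrbitTransversal π ℛ) (j : ι) : j ∈ orbitOf π (hℛ.rep j) :=
  (hℛ j).exists.choose_spec.2

theorem rep_eq_iff (hℛ : IsOrbitTransversal π ℛ) {i j : ι} (hi : i ∈ ℛ) :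
    hℛ.rep j = i ↔ j ∈ orbitOf π i :=
  ⟨fun h => h ▸ hℛ.mem_orbitOf_rep j, fun hj =>
    (hℛ j).unique ⟨hℛ.rep_mem j, hℛ.mem_orbitOf_rep j⟩ ⟨hi, hj⟩⟩

theorem rep_of_mem (hℛ : IsOrbitTransversal π ℛ) {i : ι} (hi : i ∈ ℛ) : hℛ.rep i = i :=
  (hℛ.rep_eq_iff hi).2 ⟨0, rfl⟩

theorem sum_eq_sum_finsum_orbitOf [Fintype ι] {M : Type*} [AddCommMonoid M]
    (hℛ : IsOrbitTransversal π ℛ) (g : ι → M) :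
    ∑ j, g j = ∑ i ∈ ℛ, ∑ᶠ j ∈ orbitOf π i, g j := by
  classical
  rw [← sum_fiberwise_of_maps_to (g := hℛ.rep) fun j _ => hℛ.rep_mem j]
  refine sum_congr rfl fun i hi => ?_
  have hfiber : orbitOf π i = ↑(univ.filter fun j => hℛ.rep j = i) := by
    ext j
    simp [hℛ.rep_eq_iff hi]
  rw [hfiber, finsum_mem_coe_finset]

theorem sum_smul_eq_sum_smul_finsum_orbitOf [Fintype ι] {R M : Type*} [Semiring R]
    [AddCommMonoid M] [Module R M] (hℛ : IsOrbitTransversal π ℛ) (v : ι → M) {c : ι → R}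
    (hc : ∀ i ∈ ℛ, ∀ j ∈ orbitOf π i, c j = c i) :
    ∑ j, c j • v j = ∑ i ∈ ℛ, c i • ∑ᶠ j ∈ orbitOf π i, v j := by
  rw [hℛ.sum_eq_sum_finsum_orbitOf]
  refine sum_congr rfl fun i hi => ?_
  rw [smul_finsum_mem (Set.toFinite _)]
  exact finsum_mem_congr rfl fun j hj => by rw [hc i hi j hj]

end IsOrbitTransversal

end OrbitTransversal

theorem leG_iff_leH_general
    {ι E : Type} [Fintype ι] [DecidableEq ι]
    [NormedAddCommGroup E] [InnerProductSpace ℝ E]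
    (S : RootSystemCtx ι E)
    (θ : E ≃ₗᵢ[ℝ] E)
    (π : Equiv.Perm ι) (hθsimple : ∀ i, θ (S.simple i) = S.simple (π i))
    (ℛ : Finset ι) (hℛ : ∀ j : ι, ∃! i, i ∈ ℛ ∧ j ∈ orbitOf π i)
    (μ : E) (hμθ : θ μ = μ)
    (ν : E) (hνθ : θ ν = ν) :
    (∃ c : ι → ℕ, μ - ν = ∑ i, (c i : ℝ) • corootOf (S.simple i)) ↔
      ∃ d : ι → ℕ, μ - ν = ∑ i ∈ ℛ, (d i : ℝ) • Ncoroot S π i := by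
  replace hℛ : IsOrbitTransversal π ℛ := hℛ
  constructor
  · rintro ⟨c, hc⟩
    have hfixed : ∑ i, (c i : ℝ) • corootOf (S.simple (π i)) =
        ∑ i, (c i : ℝ) • corootOf (S.simple i) :=
      calc ∑ i, (c i : ℝ) • corootOf (S.simple (π i)) = θ (μ - ν) := by
            simp only [hc, map_sum, map_smul, θ.map_corootOf, hθsimple]
        _ = μ - ν := by rw [map_sub, hμθ, hνθ]
        _ = _ := hc
    have hcπ (i : ι) : c (π i) = c i := by
      exact_mod_cast S.indep.corootOf.apply_perm_eq_of_sum_smul_comp_perm_eq π hfixed i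
    refine ⟨c, hc.trans (hℛ.sum_smul_eq_sum_smul_finsum_orbitOf _ fun i _ j hj => ?_)⟩
    exact_mod_cast apply_eq_of_mem_orbitOf hcπ hj
  · rintro ⟨d, hd⟩
    refine ⟨fun j => d (hℛ.rep j), hd.trans ?_⟩
    rw [hℛ.sum_smul_eq_sum_smul_finsum_orbitOf _ fun i hi j hj => ?_]
    · exact sum_congr rfl fun i hi => by dsimp only; rw [hℛ.rep_of_mem hi, Ncoroot]
    · dsimp only
      rw [(hℛ.rep_eq_iff hi).2 hj, hℛ.rep_of_mem hi]

/-- (folding) Let `μ, ν ∈ Y = X^θ`. Then `ν ≤_G μ`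
(`μ - ν` is a nonnegative integral combination of the simple coroots `α∨`,
`α ∈ Δ`) if and only if `ν ≤_H μ` (`μ - ν` is a nonnegative integral
combination of the folded simple coroots `N(α∨)`, `α ∈ ℛ`). -/
theorem leG_iff_leH
    {ι E : Type} [Fintype ι] [DecidableEq ι]
    [NormedAddCommGroup E] [InnerProductSpace ℝ E]
    (S : RootSystemCtx ι E) (hSL : S.SimplyLaced)
    (X : AddSubgroup E)
    (hXcor : ∀ a ∈ S.Roots, corootOf a ∈ X)
    (hXint : ∀ a ∈ S.Roots, ∀ x ∈ X, ∃ m : ℤ, (inner ℝ a x : ℝ) = m)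
    (θ : E ≃ₗᵢ[ℝ] E) (n : ℕ) (hn : 0 < n) (hθn : θ ^ n = 1)
    (hθX : ∀ x ∈ X, θ x ∈ X)
    (π : Equiv.Perm ι) (hθsimple : ∀ i, θ (S.simple i) = S.simple (π i))
    (horth : ∀ i : ι, ∀ k : ℕ, S.simple ((π ^ k) i) ≠ S.simple i →
      (inner ℝ (S.simple i) (S.simple ((π ^ k) i)) : ℝ) = 0)
    (ℛ : Finset ι) (hℛ : ∀ j : ι, ∃! i, i ∈ ℛ ∧ j ∈ orbitOf π i)
    (μ : E) (hμX : μ ∈ X) (hμθ : θ μ = μ)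
    (ν : E) (hνX : ν ∈ X) (hνθ : θ ν = ν) :
    (∃ c : ι → ℕ, μ - ν = ∑ i, (c i : ℝ) • corootOf (S.simple i)) ↔
      ∃ d : ι → ℕ, μ - ν = ∑ i ∈ ℛ, (d i : ℝ) • Ncoroot S π i :=
  leG_iff_leH_general S θ π hθsimple ℛ hℛ μ hμθ ν hνθ
end
end
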